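/- Let ℓ be an ordered special length vector of type {n−4, n−3, n−2} (i.e., {n−4,n−3,n−2} is long with respect to ℓ and ℓ is special). Then for every J ∈ Ṡ(ℓ) (i.e., J ⊆ {1,…,n−1} with J ∪ {n} short), one has J ∪ {n} ≤ {1,…,n−5, n−1, n} in the dominance partial order. Consequently, the collection Ṡ(ℓ) is the same for all ordered special length vectors of this type, so there is exactly one chamber of type {n−4,n−3,n−2} up to permutation. -/

import Mathlib

open Finset

/-- The sum of `ℓ` over `J` is less than the sum over the complement in `{1,…,n}`. -/
def Short (n : ℕ) (ℓ : ℕ → ℝ) (J : Finset ℕ) : Prop :=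
  ∑ j ∈ J, ℓ j < ∑ j ∈ Finset.Icc 1 n \ J, ℓ j

/-- `J` is long iff its complement in `{1,…,n}` is short. -/
def Long (n : ℕ) (ℓ : ℕ → ℝ) (J : Finset ℕ) : Prop :=
  Short n ℓ (Finset.Icc 1 n \ J)

/-- All entries positive. -/
def LengthVec (n : ℕ) (ℓ : ℕ → ℝ) : Prop := ∀ i ∈ Finset.Icc 1 n, 0 < ℓ i

/-- `ℓ₁ ≤ … ≤ ℓₙ`. -/
def OrderedVec (n : ℕ) (ℓ : ℕ → ℝ) : Prop :=
  ∀ i j : ℕ, 1 ≤ i → i ≤ j → j ≤ n → ℓ i ≤ ℓ j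

/-- No subset has sum equal to the sum of its complement. -/
def Generic (n : ℕ) (ℓ : ℕ → ℝ) : Prop :=
  ∀ J ⊆ Finset.Icc 1 n, ∑ j ∈ J, ℓ j ≠ ∑ j ∈ Finset.Icc 1 n \ J, ℓ j

/-- Dominance order: an injective order-preserving map `φ : J₁ → J₂` with `x ≤ φ x`. -/
def DomLe (J₁ J₂ : Finset ℕ) : Prop :=
  ∃ φ : ℕ → ℕ, Set.InjOn φ ↑J₁ ∧ (∀ x ∈ J₁, φ x ∈ J₂) ∧
    (∀ x ∈ J₁, ∀ y ∈ J₁, x < y → φ x < φ y) ∧ ∀ x ∈ J₁, x ≤ φ x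

/-- `Ṡ_k(ℓ)`: subsets `J ⊆ {1,…,n−1}` of cardinality `k` with `J ∪ {n}` short. -/
def SdotSet (n : ℕ) (ℓ : ℕ → ℝ) (k : ℕ) : Set (Finset ℕ) :=
  {J | J ⊆ Finset.Icc 1 (n-1) ∧ J.card = k ∧ Short n ℓ (insert n J)}

/-- `Ṡ(ℓ)`: subsets `J ⊆ {1,…,n−1}` with `J ∪ {n}` short. -/
def Sdot (n : ℕ) (ℓ : ℕ → ℝ) : Set (Finset ℕ) :=
  {J | J ⊆ Finset.Icc 1 (n-1) ∧ Short n ℓ (insert n J)}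

/-- Special: `Ṡ_{n−3}(ℓ) = ∅ ≠ Ṡ_{n−4}(ℓ)`. -/
def SpecialVec (n : ℕ) (ℓ : ℕ → ℝ) : Prop :=
  SdotSet n ℓ (n-3) = ∅ ∧ SdotSet n ℓ (n-4) ≠ ∅

/-- `T` is the type of `ℓ`: the minimal three-element long subset of `{1,…,n−1}`. -/
def IsType (n : ℕ) (ℓ : ℕ → ℝ) (T : Finset ℕ) : Prop :=
  T ⊆ Finset.Icc 1 (n-1) ∧ T.card = 3 ∧ Long n ℓ T ∧
    ∀ T' ⊆ Finset.Icc 1 (n-1), T'.card = 3 → Long n ℓ T' → DomLe T T'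

/-!
Since `{n-4, n-3, n-2}` is long, its complement `M = {1, …, n-5, n-1, n}` is short. For
`J ⊆ {1, …, n-1}`, `J ∪ {n}` is short iff `J ∪ {n} ≤ M`: dominance only increases sums, and
conversely two elements `a < b` of `J` with `a ≥ n-4` would give `{a, b, n}` dominating
`{n-4, n-3, n-2}`, hence long, inside the short set `J ∪ {n}`. So `Ṡ(ℓ)` is described by the
type alone.
-/

section LengthVec

variable {n : ℕ} {ℓ : ℕ → ℝ}

theorem short_iff_two_mul_sum_lt {J : Finset ℕ} (hJ : J ⊆ Icc 1 n) :
    Short n ℓ J ↔ 2 * ∑ j ∈ J, ℓ j < ∑ j ∈ Icc 1 n, ℓ j := by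
  rw [Short, ← sum_sdiff hJ]
  constructor <;> intro h <;> linarith

theorem long_iff_sum_lt_two_mul {T : Finset ℕ} (hT : T ⊆ Icc 1 n) :
    Long n ℓ T ↔ ∑ j ∈ Icc 1 n, ℓ j < 2 * ∑ j ∈ T, ℓ j := by
  rw [Long, short_iff_two_mul_sum_lt sdiff_subset, ← sum_sdiff hT]
  constructor <;> intro h <;> linarith

theorem LengthVec.sum_le_sum_of_subset (hpos : LengthVec n ℓ) {A B : Finset ℕ} (hAB : A ⊆ B)
    (hB : B ⊆ Icc 1 n) : ∑ j ∈ A, ℓ j ≤ ∑ j ∈ B, ℓ j :=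
  sum_le_sum_of_subset_of_nonneg hAB fun i hi _ => (hpos i (hB hi)).le

theorem sum_le_sum_of_domLe (hpos : LengthVec n ℓ) (hord : OrderedVec n ℓ) {A B : Finset ℕ}
    (hA : A ⊆ Icc 1 n) (hB : B ⊆ Icc 1 n) (h : DomLe A B) :
    ∑ j ∈ A, ℓ j ≤ ∑ j ∈ B, ℓ j := by
  obtain ⟨φ, hinj, hmaps, -, hle⟩ := h
  calc ∑ j ∈ A, ℓ j ≤ ∑ j ∈ A, ℓ (φ j) := sum_le_sum fun i hi =>
        hord i (φ i) (mem_Icc.mp (hA hi)).1 (hle i hi) (mem_Icc.mp (hB (hmaps i hi))).2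
    _ = ∑ j ∈ A.image φ, ℓ j := (sum_image fun x hx y hy hxy => hinj hx hy hxy).symm
    _ ≤ ∑ j ∈ B, ℓ j := hpos.sum_le_sum_of_subset (image_subset_iff.mpr hmaps) hB

theorem short_of_domLe (hpos : LengthVec n ℓ) (hord : OrderedVec n ℓ) {A B : Finset ℕ}
    (hA : A ⊆ Icc 1 n) (hB : B ⊆ Icc 1 n) (h : DomLe A B) (hBshort : Short n ℓ B) :
    Short n ℓ A := by
  rw [short_iff_two_mul_sum_lt hA]
  rw [short_iff_two_mul_sum_lt hB] at hBshort
  linarith [sum_le_sum_of_domLe hpos hord hA hB h]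

end LengthVec

theorem sum_triple {M : Type*} [AddCommMonoid M] (f : ℕ → M) {a b c : ℕ} (hab : a < b)
    (hbc : b < c) : ∑ j ∈ ({a, b, c} : Finset ℕ), f j = f a + f b + f c := by
  rw [sum_insert (by simp only [mem_insert, mem_singleton]; omega),
    sum_insert (by simp only [mem_singleton]; omega), sum_singleton, add_assoc]

theorem domLe_of_strictMonoOn {A B : Finset ℕ} {φ : ℕ → ℕ} (hmono : StrictMonoOn φ ↑A)
    (hmaps : ∀ x ∈ A, φ x ∈ B) (hle : ∀ x ∈ A, x ≤ φ x) : DomLe A B :=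
  ⟨φ, hmono.injOn, hmaps, fun _ hx _ hy => hmono hx hy, hle⟩

/-- The dominating map keeps `n` and the elements `≤ k` and sends the largest element of `J` to
`n-1`. -/
theorem domLe_insert_of_lt_imp_le {n k : ℕ} (hk : k < n - 1) {J : Finset ℕ}
    (hJ : J ⊆ Icc 1 (n - 1)) (hsmall : ∀ a ∈ J, ∀ b ∈ J, a < b → a ≤ k) :
    DomLe (insert n J) (insert n (insert (n - 1) (Icc 1 k))) := by
  have hbounds : ∀ x ∈ insert n J, x = n ∨ 1 ≤ x ∧ x ≤ n - 1 := fun x hx =>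
    (mem_insert.mp hx).imp_right fun hx => mem_Icc.mp (hJ hx)
  refine domLe_of_strictMonoOn (φ := fun x => if x = n then n else if x ≤ k then x else n - 1)
    (fun x hx y hy hxy => ?_) (fun x hx => ?_) (fun x hx => ?_)
  · have hx := mem_coe.mp hx
    have hy := mem_coe.mp hy
    have hxk : x ≠ n → y ≠ n → x ≤ k := fun hxn hyn =>
      hsmall x ((mem_insert.mp hx).resolve_left hxn) y ((mem_insert.mp hy).resolve_left hyn) hxy
    have := hbounds x hx
    have := hbounds y hy
    dsimp only
    split_ifs <;> omega
  · have := hbounds x hx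
    simp only [mem_insert, mem_Icc]
    split_ifs <;> omega
  · have := hbounds x hx
    split_ifs <;> omega

theorem insert_subset_Icc {n : ℕ} (hn : 1 ≤ n) {J : Finset ℕ} (hJ : J ⊆ Icc 1 (n - 1)) :
    insert n J ⊆ Icc 1 n :=
  insert_subset (mem_Icc.mpr ⟨hn, le_rfl⟩) (hJ.trans (Icc_subset_Icc_right (Nat.sub_le n 1)))

section LowType

variable {n : ℕ} {ℓ : ℕ → ℝ}

theorem sdiff_lowType (hn : 2 ≤ n) :
    Icc 1 n \ {n - 4, n - 3, n - 2} = insert n (insert (n - 1) (Icc 1 (n - 5))) := by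
  ext x
  simp only [mem_sdiff, mem_Icc, mem_insert, mem_singleton]
  omega

theorem short_lowTypeComplement (hn : 2 ≤ n) (hlong : Long n ℓ {n - 4, n - 3, n - 2}) :
    Short n ℓ (insert n (insert (n - 1) (Icc 1 (n - 5)))) := by
  rwa [Long, sdiff_lowType hn] at hlong

theorem le_sub_five_of_lt_of_short (hn : 5 ≤ n) (hpos : LengthVec n ℓ)
    (hord : OrderedVec n ℓ) (hlong : Long n ℓ {n - 4, n - 3, n - 2}) {J : Finset ℕ}
    (hJ : J ⊆ Icc 1 (n - 1)) (hshort : Short n ℓ (insert n J)) {a b : ℕ} (ha : a ∈ J)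
    (hb : b ∈ J) (hab : a < b) : a ≤ n - 5 := by
  by_contra! hlarge
  have ha' := mem_Icc.mp (hJ ha)
  have hb' := mem_Icc.mp (hJ hb)
  have hnJ := insert_subset_Icc (by omega) hJ
  have hT : ({n - 4, n - 3, n - 2} : Finset ℕ) ⊆ Icc 1 n := by
    intro x hx
    simp only [mem_insert, mem_singleton] at hx
    simp only [mem_Icc]
    omega
  have habn : ({a, b, n} : Finset ℕ) ⊆ insert n J := by
    intro x hx
    simp only [mem_insert, mem_singleton] at hx ⊢
    rcases hx with rfl | rfl | rfl <;> tauto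
  have hTsum := sum_triple ℓ (show n - 4 < n - 3 by omega) (show n - 3 < n - 2 by omega)
  have habnsum := sum_triple ℓ hab (show b < n by omega)
  have h4 : ℓ (n - 4) ≤ ℓ a := hord _ _ (by omega) (by omega) (by omega)
  have h3 : ℓ (n - 3) ≤ ℓ b := hord _ _ (by omega) (by omega) (by omega)
  have h2 : ℓ (n - 2) ≤ ℓ n := hord _ _ (by omega) (by omega) le_rfl
  have hsub := hpos.sum_le_sum_of_subset habn hnJ
  rw [long_iff_sum_lt_two_mul hT] at hlong
  rw [short_iff_two_mul_sum_lt hnJ] at hshort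
  linarith

theorem sdot_eq_setOf_domLe (hn : 5 ≤ n) (hpos : LengthVec n ℓ) (hord : OrderedVec n ℓ)
    (hlong : Long n ℓ {n - 4, n - 3, n - 2}) :
    Sdot n ℓ = {J | J ⊆ Icc 1 (n - 1) ∧
      DomLe (insert n J) (insert n (insert (n - 1) (Icc 1 (n - 5))))} := by
  ext J
  refine and_congr_right fun hJ => ⟨fun hshort => ?_, fun hdom => ?_⟩
  · exact domLe_insert_of_lt_imp_le (by omega) hJ fun a ha b hb hab =>
      le_sub_five_of_lt_of_short hn hpos hord hlong hJ hshort ha hb hab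
  · have hM : insert n (insert (n - 1) (Icc 1 (n - 5))) ⊆ Icc 1 n :=
      sdiff_lowType (n := n) (by omega) ▸ sdiff_subset
    exact short_of_domLe hpos hord (insert_subset_Icc (by omega) hJ) hM hdom
      (short_lowTypeComplement (by omega) hlong)

end LowType

theorem unique_chamber_low_type_general (n : ℕ) (ℓ : ℕ → ℝ) (hn : 5 ≤ n)
    (hpos : LengthVec n ℓ) (hord : OrderedVec n ℓ)
    (hT : IsType n ℓ {n-4, n-3, n-2}) :
    (∀ J ∈ Sdot n ℓ,
      DomLe (insert n J) (insert n (insert (n-1) (Finset.Icc 1 (n-5))))) ∧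
    (∀ ℓ' : ℕ → ℝ, LengthVec n ℓ' → OrderedVec n ℓ' → Generic n ℓ' →
      SpecialVec n ℓ' → IsType n ℓ' {n-4, n-3, n-2} → Sdot n ℓ = Sdot n ℓ') := by
  rw [sdot_eq_setOf_domLe hn hpos hord hT.2.2.1]
  refine ⟨fun J hJ => hJ.2, fun ℓ' hpos' hord' _ _ hT' => ?_⟩
  rw [sdot_eq_setOf_domLe hn hpos' hord' hT'.2.2.1]

/-- For type {n−4,n−3,n−2}, every J ∈ Ṡ(ℓ) satisfies
J ∪ {n} ≤ {1,…,n−5,n−1,n}; consequently Ṡ(ℓ) is determined by the type, so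
there is exactly one chamber of this type up to permutation. -/
theorem unique_chamber_low_type (n : ℕ) (ℓ : ℕ → ℝ) (hn : 5 ≤ n)
    (hpos : LengthVec n ℓ) (hord : OrderedVec n ℓ) (hgen : Generic n ℓ)
    (hspec : SpecialVec n ℓ) (hT : IsType n ℓ {n-4, n-3, n-2}) :
    (∀ J ∈ Sdot n ℓ,
      DomLe (insert n J) (insert n (insert (n-1) (Finset.Icc 1 (n-5))))) ∧
    (∀ ℓ' : ℕ → ℝ, LengthVec n ℓ' → OrderedVec n ℓ' → Generic n ℓ' →
      SpecialVec n ℓ' → IsType n ℓ' {n-4, n-3, n-2} → Sdot n ℓ = Sdot n ℓ') :=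
  unique_chamber_low_type_general n ℓ hn hpos hord hT
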